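/- For every natural number n ≥ 2, the 1-Grassmannian constant satisfies μ_{n+2,n} = (2/n)·cos(π/(n+2)). -/

import Mathlib

open scoped RealInnerProductSpace
abbrev E (n : ℕ) := EuclideanSpace ℝ (Fin n)
noncomputable def cohF {n m : ℕ} (x : Fin m → E n) : ℝ :=
  sSup {r : ℝ | ∃ i j : Fin m, i ≠ j ∧ r = |⟪x i, x j⟫|}
noncomputable def muConst (m n : ℕ) : ℝ :=
  sInf {r : ℝ | ∃ x : Fin m → E n, (∀ i, ‖x i‖ = 1) ∧
    (∀ v : E n, ∑ i, ⟪x i, v⟫ • x i = ((m : ℝ) / n) • v) ∧ cohF x = r}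

/-!
Completing the rescaled synthesis matrix of a unit-norm tight frame of `p + q` vectors in `ℝ^p`
to an orthogonal matrix yields its Naimark complement: a unit-norm tight frame in `ℝ^q` whose
off-diagonal Gram entries are `-p/q` times the original ones. Hence `μ_{p+q,q} = (p/q) μ_{p+q,p}`,
and it remains to show `μ_{m,2} = cos (π/m)`. The harmonic frame `(cos (kπ/m), sin (kπ/m))`
attains `cos (π/m)`. Conversely, the lines spanned by `m` unit vectors in the plane have angles
defined modulo `π`, so by pigeonhole two of them make an angle at most `π/m`, which forces
`|⟪v i, v j⟫| ≥ cos (π/m)`.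
-/

open Real Finset

def IsTightFrame {ι F : Type*} [Fintype ι] [NormedAddCommGroup F] [InnerProductSpace ℝ F]
    (x : ι → F) (c : ℝ) : Prop :=
  ∀ v, ∑ i, ⟪x i, v⟫ • x i = c • v

theorem isTightFrame_iff_sum_mul {ι κ : Type*} [Fintype ι] [Fintype κ] [DecidableEq κ]
    {x : ι → EuclideanSpace ℝ κ} {c : ℝ} :
    IsTightFrame x c ↔ ∀ a b, ∑ i, x i a * x i b = if a = b then c else 0 := by
  constructor
  · intro h a b
    have := congrArg (fun v : EuclideanSpace ℝ κ => v a) (h (EuclideanSpace.single b 1))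
    simpa [EuclideanSpace.inner_single_right, Finset.sum_apply, WithLp.ofLp_sum, mul_comm, eq_comm,
      PiLp.single_apply] using this
  · intro h v
    ext a
    simp only [WithLp.ofLp_sum, WithLp.ofLp_smul, Finset.sum_apply, Pi.smul_apply, smul_eq_mul,
      PiLp.inner_apply, RCLike.inner_apply, conj_trivial, sum_mul]
    rw [sum_comm]
    simp_rw [mul_assoc, ← mul_sum, mul_comm (v _), h]
    simp

theorem IsTightFrame.smul {ι F : Type*} [Fintype ι] [NormedAddCommGroup F] [InnerProductSpace ℝ F]
    {x : ι → F} {c : ℝ} (h : IsTightFrame x c) (a : ℝ) :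
    IsTightFrame (fun i => a • x i) (a ^ 2 * c) := by
  intro v
  calc ∑ i, ⟪a • x i, v⟫ • a • x i = a ^ 2 • ∑ i, ⟪x i, v⟫ • x i := by
        rw [smul_sum]
        congr! 1 with i
        rw [real_inner_smul_left, smul_smul, smul_smul]
        ring_nf
    _ = (a ^ 2 * c) • v := by rw [h v, smul_smul]

theorem Orthonormal.exists_orthonormalBasis_sumInl {F κ κ' : Type*} [NormedAddCommGroup F]
    [InnerProductSpace ℝ F] [FiniteDimensional ℝ F] [Fintype κ] [Fintype κ'] {r : κ → F}
    (hr : Orthonormal ℝ r) (hcard : Module.finrank ℝ F = Fintype.card κ + Fintype.card κ') :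
    ∃ b : OrthonormalBasis (κ ⊕ κ') ℝ F, ∀ a, b (Sum.inl a) = r a := by
  let e := (Equiv.ofInjective _ (Sum.inl_injective (α := κ) (β := κ'))).symm
  have hv : Orthonormal ℝ ((Set.range (Sum.inl : κ → κ ⊕ κ')).domRestrict (Sum.elim r 0)) := by
    convert hr.comp e e.injective
    ext ⟨_, a, rfl⟩ : 1
    simp [e]
  obtain ⟨b, hb⟩ := hv.exists_orthonormalBasis_extension_of_card_eq (by simpa using hcard)
  exact ⟨b, fun a => hb _ ⟨a, rfl⟩⟩

theorem OrthonormalBasis.sum_apply_mul_apply {ι τ : Type*} [Fintype ι] [Fintype τ] [DecidableEq ι]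
    (b : OrthonormalBasis τ ℝ (EuclideanSpace ℝ ι)) (i j : ι) :
    ∑ t, b t i * b t j = if i = j then 1 else 0 := by
  have := b.sum_inner_mul_inner (EuclideanSpace.single i 1) (EuclideanSpace.single j 1)
  simpa [EuclideanSpace.inner_single_left, EuclideanSpace.inner_single_right, mul_comm,
    PiLp.single_apply, eq_comm] using this

theorem IsTightFrame.exists_complement {ι κ κ' : Type*} [Fintype ι] [Fintype κ] [Fintype κ']
    [DecidableEq ι] {u : ι → EuclideanSpace ℝ κ} (hu : IsTightFrame u 1)
    (hcard : Fintype.card ι = Fintype.card κ + Fintype.card κ') :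
    ∃ v : ι → EuclideanSpace ℝ κ', IsTightFrame v 1 ∧
      ∀ i j, ⟪u i, u j⟫ + ⟪v i, v j⟫ = if i = j then 1 else 0 := by
  classical
  -- The rows of `u` are orthonormal; the rows of `v` complete them to an orthonormal basis.
  let r : κ → EuclideanSpace ℝ ι := fun a => WithLp.toLp 2 fun i => u i a
  have hr : Orthonormal ℝ r := by
    rw [orthonormal_iff_ite]
    intro a b
    simpa [r, PiLp.inner_apply, mul_comm] using isTightFrame_iff_sum_mul.mp hu a b
  obtain ⟨b, hb⟩ := hr.exists_orthonormalBasis_sumInl (κ' := κ') (by simpa using hcard)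
  refine ⟨fun i => WithLp.toLp 2 fun c => b (Sum.inr c) i, ?_, fun i j => ?_⟩
  · rw [isTightFrame_iff_sum_mul]
    intro c c'
    simpa [PiLp.inner_apply, mul_comm] using
      orthonormal_iff_ite.mp b.orthonormal (Sum.inr c) (Sum.inr c')
  · have := b.sum_apply_mul_apply i j
    rw [Fintype.sum_sum_type] at this
    simpa [PiLp.inner_apply, hb, r, mul_comm] using this

theorem exists_naimark_complement {ι : Type*} [Fintype ι] [DecidableEq ι] {p q : ℕ} (hp : 0 < p)
    (hq : 0 < q) (hcard : Fintype.card ι = p + q) {x : ι → E p} (hx : ∀ i, ‖x i‖ = 1)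
    (ht : IsTightFrame x (Fintype.card ι / p)) :
    ∃ y : ι → E q, (∀ i, ‖y i‖ = 1) ∧ IsTightFrame y (Fintype.card ι / q) ∧
      ∀ i j, i ≠ j → ⟪y i, y j⟫ = -(p / q) * ⟪x i, x j⟫ := by
  set m : ℝ := (Fintype.card ι : ℝ)
  have hm : m = p + q := by simp [m, hcard]
  have hm0 : 0 < m := by rw [hm]; positivity
  have hpm : 0 ≤ (p : ℝ) / m := by positivity
  have hqm : 0 ≤ m / q := by positivity
  have hu : IsTightFrame (fun i => √(p / m) • x i) 1 := by
    convert ht.smul √(p / m) using 1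
    rw [sq_sqrt hpm]
    field_simp
  obtain ⟨v, hv, hgram⟩ := hu.exists_complement (κ' := Fin q) (by simpa using hcard)
  set y := fun i => √(m / q) • v i
  have hy : ∀ i j, ⟪y i, y j⟫ = m / q * ((if i = j then 1 else 0) - p / m * ⟪x i, x j⟫) := by
    intro i j
    have := hgram i j
    simp only [y, real_inner_smul_left, real_inner_smul_right, ← mul_assoc,
      mul_self_sqrt hpm, mul_self_sqrt hqm] at this ⊢
    rw [← this]
    ring
  refine ⟨y, fun i => ?_, ?_, fun i j hij => ?_⟩
  · rw [← pow_eq_one_iff_of_nonneg (norm_nonneg _) two_ne_zero, ← real_inner_self_eq_norm_sq, hy,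
      real_inner_self_eq_norm_sq, hx, if_pos rfl]
    field_simp
    linarith
  · convert hv.smul √(m / q) using 1
    rw [sq_sqrt hqm, mul_one]
  · rw [hy, if_neg hij]
    field_simp
    ring

theorem abs_inner_le_cohF {n m : ℕ} (x : Fin m → E n) {i j : Fin m} (hij : i ≠ j) :
    |⟪x i, x j⟫| ≤ cohF x := by
  refine le_csSup ?_ ⟨i, j, hij, rfl⟩
  refine (Set.finite_range fun p : Fin m × Fin m => |⟪x p.1, x p.2⟫|).subset ?_ |>.bddAbove
  rintro _ ⟨i, j, -, rfl⟩
  exact ⟨(i, j), rfl⟩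

theorem cohF_eq_abs_mul_of_inner {n n' m : ℕ} {x : Fin m → E n} {y : Fin m → E n'} {c : ℝ}
    (h : ∀ i j, i ≠ j → ⟪y i, y j⟫ = c * ⟪x i, x j⟫) : cohF y = |c| * cohF x := by
  unfold cohF
  rw [← smul_eq_mul, ← Real.sSup_smul_of_nonneg (abs_nonneg c)]
  congr 1
  ext r
  constructor
  · rintro ⟨i, j, hij, rfl⟩
    exact ⟨_, ⟨i, j, hij, rfl⟩, by simp only [smul_eq_mul, h i j hij, abs_mul]⟩
  · rintro ⟨_, ⟨i, j, hij, rfl⟩, rfl⟩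
    exact ⟨i, j, hij, by simp only [smul_eq_mul, h i j hij, abs_mul]⟩

theorem muConst_add_eq_div_mul {p q : ℕ} (hp : 0 < p) (hq : 0 < q) :
    muConst (p + q) q = p / q * muConst (p + q) p := by
  unfold muConst
  rw [← smul_eq_mul, ← Real.sInf_smul_of_nonneg (by positivity)]
  congr 1
  ext r
  constructor
  · rintro ⟨y, hy, hyt, rfl⟩
    obtain ⟨x, hx, hxt, hxy⟩ :=
      exists_naimark_complement hq hp (by simp [add_comm]) hy (by rwa [Fintype.card_fin])
    refine ⟨cohF x, ⟨x, hx, by rwa [Fintype.card_fin] at hxt, rfl⟩, ?_⟩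
    simp only [cohF_eq_abs_mul_of_inner hxy, smul_eq_mul, abs_neg, abs_div, Nat.abs_cast]
    field_simp
  · rintro ⟨_, ⟨x, hx, hxt, rfl⟩, rfl⟩
    obtain ⟨y, hy, hyt, hyx⟩ :=
      exists_naimark_complement hp hq (by simp) hx (by rwa [Fintype.card_fin])
    refine ⟨y, hy, by rwa [Fintype.card_fin] at hyt, ?_⟩
    simp only [cohF_eq_abs_mul_of_inner hyx, smul_eq_mul, abs_neg, abs_div, Nat.abs_cast]

noncomputable def unitVec (θ : ℝ) : E 2 := !₂[cos θ, sin θ]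

theorem inner_unitVec (a b : ℝ) : ⟪unitVec a, unitVec b⟫ = cos (a - b) := by
  simp [unitVec, PiLp.inner_apply, Fin.sum_univ_two, cos_sub]
  ring

theorem norm_unitVec (θ : ℝ) : ‖unitVec θ‖ = 1 := by
  rw [norm_eq_sqrt_real_inner, inner_unitVec, sub_self, cos_zero, sqrt_one]

theorem exists_eq_unitVec {v : E 2} (hv : ‖v‖ = 1) : ∃ θ, v = unitVec θ := by
  have hz : ‖(⟨v 0, v 1⟩ : ℂ)‖ = 1 := by
    rw [← hv, EuclideanSpace.norm_eq, Complex.norm_def, Complex.normSq_mk, Fin.sum_univ_two]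
    simp [sq]
  obtain ⟨θ, hθ⟩ := (Complex.norm_eq_one_iff _).mp hz
  refine ⟨θ, ?_⟩
  ext i
  fin_cases i
  · simpa [unitVec] using congrArg Complex.re hθ.symm
  · simpa [unitVec] using congrArg Complex.im hθ.symm

theorem sum_cos_sin_two_mul_eq_zero {m : ℕ} (hm : 2 ≤ m) :
    ∑ k : Fin m, cos (2 * (k * π / m)) = 0 ∧ ∑ k : Fin m, sin (2 * (k * π / m)) = 0 := by
  have hζ := Complex.isPrimitiveRoot_exp m (by omega)
  have hsum := hζ.geom_sum_eq_zero (by omega)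
  have hpow : ∀ k : ℕ, Complex.exp (2 * π * Complex.I / m) ^ k
      = Complex.exp ((2 * (k * π / m) : ℝ) * Complex.I) := by
    intro k
    rw [← Complex.exp_nat_mul]
    push_cast
    ring_nf
  simp_rw [hpow, ← Fin.sum_univ_eq_sum_range
    (fun k : ℕ => Complex.exp ((2 * (k * π / m) : ℝ) * Complex.I))] at hsum
  constructor
  · simpa only [Complex.re_sum, Complex.exp_ofReal_mul_I_re, Complex.zero_re] using
      congrArg Complex.re hsum
  · simpa only [Complex.im_sum, Complex.exp_ofReal_mul_I_im, Complex.zero_im] using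
      congrArg Complex.im hsum

noncomputable def harmonicFrame (m : ℕ) : Fin m → E 2 := fun k => unitVec (k * π / m)

theorem isTightFrame_harmonicFrame {m : ℕ} (hm : 2 ≤ m) :
    IsTightFrame (harmonicFrame m) (m / 2) := by
  obtain ⟨hcos, hsin⟩ := sum_cos_sin_two_mul_eq_zero hm
  have hcc : ∑ k : Fin m, cos (k * π / m) ^ 2 = m / 2 := by
    simp_rw [cos_sq, sum_add_distrib, ← sum_div, hcos]
    simp
  have hss : ∑ k : Fin m, sin (k * π / m) ^ 2 = m / 2 := by
    simp_rw [sin_sq, sum_sub_distrib, hcc]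
    simp only [sum_const, card_univ, Fintype.card_fin, nsmul_eq_mul, mul_one]
    ring
  have hsc : ∑ k : Fin m, sin (k * π / m) * cos (k * π / m) = 0 := by
    have h (x : ℝ) : sin x * cos x = sin (2 * x) / 2 := by rw [sin_two_mul]; ring
    simp_rw [h, ← sum_div, hsin, zero_div]
  rw [isTightFrame_iff_sum_mul]
  intro a b
  fin_cases a <;> fin_cases b <;>
    simp [harmonicFrame, unitVec, ← sq, hcc, hss, hsc, mul_comm (cos _)]

theorem abs_cos_le_cos {a x : ℝ} (ha : 0 ≤ a) (h₁ : a ≤ |x|) (h₂ : |x| ≤ π - a) :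
    |cos x| ≤ cos a := by
  rw [← cos_abs, abs_le]
  constructor
  · rw [neg_le, ← cos_pi_sub]
    exact cos_le_cos_of_nonneg_of_le_pi ha (by linarith [abs_nonneg x]) (by linarith)
  · exact cos_le_cos_of_nonneg_of_le_pi ha (by linarith) h₁

theorem cohF_harmonicFrame {m : ℕ} (hm : 2 ≤ m) : cohF (harmonicFrame m) = cos (π / m) := by
  have hm0 : (0 : ℝ) < m := by positivity
  have hm2 : (2 : ℝ) ≤ m := by exact_mod_cast hm
  refine IsGreatest.csSup_eq ⟨⟨⟨1, by omega⟩, ⟨0, by omega⟩, by simp [Fin.ext_iff], ?_⟩, ?_⟩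
  · have hcos : 0 ≤ cos (π / m) := cos_nonneg_of_mem_Icc
      ⟨by linarith [pi_pos, div_nonneg pi_pos.le hm0.le],
        div_le_div_of_nonneg_left pi_pos.le two_pos hm2⟩
    simp [harmonicFrame, inner_unitVec, abs_of_nonneg hcos]
  · rintro _ ⟨i, j, hij, rfl⟩
    have hd : (1 : ℝ) ≤ |(i : ℝ) - j| ∧ |(i : ℝ) - j| ≤ m - 1 := by
      have hi := i.isLt
      have hj := j.isLt
      have hij' : (i : ℕ) ≠ j := Fin.val_ne_of_ne hij
      have : (1 : ℤ) ≤ |(i : ℤ) - j| ∧ |(i : ℤ) - j| ≤ m - 1 := by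
        rw [le_abs, abs_le]
        omega
      exact_mod_cast this
    rw [harmonicFrame, harmonicFrame, inner_unitVec, ← sub_div, ← sub_mul]
    apply abs_cos_le_cos (by positivity)
    · rw [abs_div, abs_mul, abs_of_pos pi_pos, abs_of_pos hm0]
      exact div_le_div_of_nonneg_right (le_mul_of_one_le_left pi_pos.le hd.1) hm0.le
    · rw [abs_div, abs_mul, abs_of_pos pi_pos, abs_of_pos hm0, div_le_iff₀ hm0, sub_mul,
        div_mul_cancel₀ _ hm0.ne']
      nlinarith [pi_pos]

theorem exists_ne_abs_sub_sub_intCast_le {m : ℕ} (hm : 2 ≤ m) (t : Fin m → ℝ) :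
    ∃ i j, i ≠ j ∧ ∃ k : ℤ, |t i - t j - k| ≤ 1 / m := by
  have hm0 : (0 : ℝ) < m := by positivity
  let o : Fin m := ⟨0, by omega⟩
  let s i := Int.fract (t i - t o)
  have hs : ∀ i j, ∃ k : ℤ, t i - t j - k = s i - s j := fun i j =>
    ⟨⌊t i - t o⌋ - ⌊t j - t o⌋, by simp only [s, Int.fract]; push_cast; ring⟩
  have hs0 : ∀ i, 0 ≤ m * s i := fun i => by positivity
  have hs1 : ∀ i, s i < 1 := fun i => Int.fract_lt_one _
  let b : Fin m → Fin m := fun i =>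
    ⟨⌊m * s i⌋₊, (Nat.floor_lt (hs0 i)).mpr (by nlinarith [hs1 i])⟩
  -- Either two points share a bucket `⌊m s⌋₊`, or some point lies in the top bucket and is then
  -- within `1/m` of `s o + 1 = 1`.
  by_cases hb : b.Injective
  · obtain ⟨j, hj⟩ := Finite.injective_iff_surjective.mp hb ⟨m - 1, by omega⟩
    have hj' : ⌊m * s j⌋₊ = m - 1 := congrArg Fin.val hj
    have hjo : j ≠ o := by
      rintro rfl
      simp [s] at hj'
      omega
    obtain ⟨k, hk⟩ := hs j o
    refine ⟨j, o, hjo, k + 1, ?_⟩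
    have hlow : ((m - 1 : ℕ) : ℝ) ≤ m * s j := hj' ▸ Nat.floor_le (hs0 j)
    rw [Nat.cast_sub (by omega), Nat.cast_one] at hlow
    have hso : s o = 0 := by simp [s]
    rw [Int.cast_add, Int.cast_one, ← sub_sub, hk, hso, le_div_iff₀' hm0, ← abs_of_pos hm0,
      ← abs_mul, abs_le]
    constructor <;> nlinarith [hs1 j]
  · obtain ⟨i, j, hij, hne⟩ : ∃ i j, b i = b j ∧ i ≠ j := by
      simpa [Function.Injective] using hb
    have hfl : ⌊m * s i⌋₊ = ⌊m * s j⌋₊ := congrArg Fin.val hij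
    obtain ⟨k, hk⟩ := hs i j
    refine ⟨i, j, hne, k, ?_⟩
    have hi₁ := Nat.floor_le (hs0 i)
    have hi₂ := Nat.lt_floor_add_one (m * s i)
    have hj₁ := Nat.floor_le (hs0 j)
    have hj₂ := Nat.lt_floor_add_one (m * s j)
    rw [hfl] at hi₁ hi₂
    rw [hk, le_div_iff₀' hm0, ← abs_of_pos hm0, ← abs_mul, abs_le]
    constructor <;> nlinarith

theorem exists_ne_cos_le_abs_inner {m : ℕ} (hm : 2 ≤ m) {v : Fin m → E 2}
    (hv : ∀ i, ‖v i‖ = 1) : ∃ i j, i ≠ j ∧ cos (π / m) ≤ |⟪v i, v j⟫| := by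
  choose θ hθ using fun i => exists_eq_unitVec (hv i)
  obtain ⟨i, j, hij, k, hk⟩ := exists_ne_abs_sub_sub_intCast_le hm fun i => θ i / π
  refine ⟨i, j, hij, ?_⟩
  have hk' : |θ i - θ j - k * π| ≤ π / m := by
    have := mul_le_mul_of_nonneg_left hk pi_pos.le
    rwa [← abs_of_pos pi_pos, ← abs_mul, abs_of_pos pi_pos, mul_one_div, mul_sub, mul_sub,
      mul_div_cancel₀ _ pi_ne_zero, mul_div_cancel₀ _ pi_ne_zero, mul_comm π] at this
  calc cos (π / m) ≤ cos (θ i - θ j - k * π) := by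
        rw [← cos_abs (θ i - θ j - k * π)]
        exact cos_le_cos_of_nonneg_of_le_pi (abs_nonneg _)
          (div_le_self pi_pos.le (by exact_mod_cast (by omega : 1 ≤ m))) hk'
    _ ≤ |cos (θ i - θ j - k * π)| := le_abs_self _
    _ = |⟪v i, v j⟫| := by
        rw [hθ i, hθ j, inner_unitVec, cos_sub_int_mul_pi, abs_mul, abs_neg_one_zpow, one_mul]

theorem muConst_two {m : ℕ} (hm : 2 ≤ m) : muConst m 2 = cos (π / m) := by
  refine IsLeast.csInf_eq
    ⟨⟨harmonicFrame m, fun k => norm_unitVec _, ?_, cohF_harmonicFrame hm⟩, ?_⟩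
  · exact_mod_cast isTightFrame_harmonicFrame hm
  · rintro _ ⟨x, hx, -, rfl⟩
    obtain ⟨i, j, hij, h⟩ := exists_ne_cos_le_abs_inner hm hx
    exact h.trans (abs_inner_le_cohF x hij)

theorem mu_n_add_two (n : ℕ) (hn : 2 ≤ n) :
    muConst (n + 2) n = (2 / (n : ℝ)) * Real.cos (Real.pi / (n + 2)) := by
  rw [add_comm n 2, muConst_add_eq_div_mul two_pos (by omega), muConst_two (by omega)]
  push_cast [add_comm]
  rfl
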